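/- Let U ∈ ℝ^{N×L} with U Uᵀ = Id_N, columns u_1,...,u_L. Fix distinct indices i, j and let U_{−i,−j} be U with columns i and j removed. Then det(U_{−i,−j} U_{−i,−j}ᵀ) = 1 − ‖u_i‖² − ‖u_j‖² + G, where G = ‖u_i‖²‖u_j‖² − ⟨u_i, u_j⟩². -/

import Mathlib

open Matrix

noncomputable def eigsDesc {n : ℕ} {A : Matrix (Fin n) (Fin n) ℝ} (hA : A.IsHermitian) : Fin n → ℝ :=
  fun i => (hA.eigenvalues ∘ Tuple.sort hA.eigenvalues) i.rev

noncomputable def svDesc {m n : ℕ} (A : Matrix (Fin m) (Fin n) ℝ) : Fin n → ℝ :=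
  fun i => Real.sqrt (eigsDesc (show (Aᵀ * A).IsHermitian by
    unfold Matrix.IsHermitian; ext i j; simp [Matrix.mul_apply, mul_comm]) i)

noncomputable def slaterEntry {N L : ℕ} (U : Matrix (Fin N) (Fin L) ℝ) (o : Fin L → Bool) : ℝ :=
  if h : (Finset.univ.filter fun p => o p = true).card = N then
    (U.submatrix id ((Finset.univ.filter fun p => o p = true).orderEmbOfFin h)).det
  else 0

noncomputable def compound {k : ℕ} (j : ℕ) (A : Matrix (Fin k) (Fin k) ℝ) :
    Matrix {s : Finset (Fin k) // s.card = j} {s : Finset (Fin k) // s.card = j} ℝ :=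
  fun σ τ => (A.submatrix (σ.1.orderEmbOfFin σ.2) (τ.1.orderEmbOfFin τ.2)).det

def IsEigenvalue {ι : Type*} [Fintype ι] (M : Matrix ι ι ℝ) (lam : ℝ) : Prop :=
  ∃ v : ι → ℝ, v ≠ 0 ∧ M.mulVec v = lam • v

noncomputable def slaterReshape {N L : ℕ} (U : Matrix (Fin N) (Fin L) ℝ) (k : ℕ) :
    Matrix (Fin (2 ^ k)) (Fin (2 ^ (L - k))) ℝ :=
  fun a b => slaterEntry U fun p =>
    if p.val < k then a.val.testBit p.val else b.val.testBit (p.val - k)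

def leftBlock {N L : ℕ} (U : Matrix (Fin N) (Fin L) ℝ) (k : ℕ) (hk : k ≤ L) :
    Matrix (Fin N) (Fin k) ℝ :=
  U.submatrix id (fun i => Fin.castLE hk i)

def rightBlock {N L : ℕ} (U : Matrix (Fin N) (Fin L) ℝ) (k : ℕ) :
    Matrix (Fin N) (Fin (L - k)) ℝ :=
  U.submatrix id (fun i => ⟨k + i.val, by have := i.isLt; omega⟩)

def shiftEmb (k L : ℕ) : Fin (L - k) ↪ Fin L :=
  ⟨fun i => ⟨k + i.val, by have := i.isLt; omega⟩, by
    intro a b h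
    have : k + a.val = k + b.val := congrArg Fin.val h
    exact Fin.ext (by omega)⟩

noncomputable def Cmat {N L : ℕ} (k : ℕ) (hk : k ≤ L) (U : Matrix (Fin N) (Fin L) ℝ) (j : ℕ) :
    Matrix {s : Finset (Fin k) // s.card = j} {s : Finset (Fin (L - k)) // s.card = N - j} ℝ :=
  fun σ ρ => slaterEntry U fun p =>
    decide (p ∈ σ.1.map (Fin.castLEEmb hk) ∪ ρ.1.map (shiftEmb k L))

def blockSym {m n : ℕ} (A : Matrix (Fin m) (Fin n) ℝ) : Matrix (Fin (m + n)) (Fin (m + n)) ℝ :=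
  (Matrix.fromBlocks 0 A Aᵀ 0).submatrix finSumFinEquiv.symm finSumFinEquiv.symm

theorem det_remove_two_columns {N L : ℕ} (U : Matrix (Fin N) (Fin (L + 2)) ℝ)
    (hU : U * Uᵀ = 1) (i j : Fin (L + 2)) (hij : i ≠ j) :
    ((U.submatrix id ((({i, j}ᶜ : Finset (Fin (L + 2))).orderEmbOfFin (by
        rw [Finset.card_compl, Fintype.card_fin,
          Finset.card_insert_of_notMem (by simpa using hij), Finset.card_singleton]
        omega) : Fin L ↪o Fin (L + 2)))) *
     (U.submatrix id ((({i, j}ᶜ : Finset (Fin (L + 2))).orderEmbOfFin (by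
        rw [Finset.card_compl, Fintype.card_fin,
          Finset.card_insert_of_notMem (by simpa using hij), Finset.card_singleton]
        omega) : Fin L ↪o Fin (L + 2))))ᵀ).det
    = 1 - (∑ r, U r i ^ 2) - (∑ r, U r j ^ 2) +
        ((∑ r, U r i ^ 2) * (∑ r, U r j ^ 2) - (∑ r, U r i * U r j) ^ 2) := by
  set s : Finset (Fin (L + 2)) := ({i, j}ᶜ : Finset (Fin (L + 2))) with hs
  have hcard : s.card = L := by
    rw [hs, Finset.card_compl, Fintype.card_fin,
      Finset.card_insert_of_notMem (by simpa using hij), Finset.card_singleton]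
    omega
  set e : Fin L ↪o Fin (L + 2) := s.orderEmbOfFin hcard with he
  have hsum : ∀ f : Fin (L + 2) → ℝ, ∑ t : Fin L, f (e t) = (∑ c, f c) - f i - f j := by
    intro f
    have h1 : ∑ t : Fin L, f (e t) = ∑ c ∈ s, f c := by
      rw [← Finset.sum_attach s f]
      exact Fintype.sum_equiv (s.orderIsoOfFin hcard).toEquiv _ _ (fun t => rfl)
    have h2 : (∑ c ∈ s, f c) + ∑ c ∈ ({i, j} : Finset (Fin (L + 2))), f c = ∑ c, f c := by
      rw [hs]; exact Finset.sum_compl_add_sum _ _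
    rw [Finset.sum_pair hij] at h2
    rw [h1]; linarith
  set V := U.submatrix id (e : Fin L → Fin (L + 2)) with hV
  set A : Matrix (Fin N) (Fin 2) ℝ := fun r p => if p = 0 then U r i else U r j with hA
  have key : V * Vᵀ = 1 + A * (-Aᵀ) := by
    ext r t
    have horth := congrFun (congrFun hU r) t
    simp only [Matrix.mul_apply, Matrix.transpose_apply, Matrix.one_apply] at horth
    simp only [Matrix.mul_apply, Matrix.transpose_apply, hV, Matrix.submatrix_apply, id]
    rw [hsum (fun c => U r c * U t c)]
    simp only [Matrix.add_apply, Matrix.mul_apply, Matrix.neg_apply, Matrix.transpose_apply,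
      Matrix.one_apply, horth, Fin.sum_univ_two]
    simp only [hA]
    norm_num
    ring
  rw [hV] at key ⊢
  rw [key, Matrix.det_one_add_mul_comm, Matrix.det_fin_two]
  have hc : ∑ r, U r j * U r i = ∑ r, U r i * U r j := by
    exact Finset.sum_congr rfl fun r _ => mul_comm _ _
  simp only [Matrix.add_apply, Matrix.mul_apply, Matrix.neg_apply, Matrix.transpose_apply,
    Matrix.one_apply]
  simp only [hA]
  norm_num [neg_mul, Finset.sum_neg_distrib, hc, ← sq]
  ring
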